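/- Let τ be an 𝔉-stopping time, λ ≥ 0, and (τ₂,…,τ_n) ∈ 𝒮^{n−1}_{λ+δ₁}(Lδ, 𝔉^{λ+δ₁}). Then the tuple (τ₂ 1_{{τ=λ}} + (τ+δ₁) 1_{{τ≠λ}}, …, τ_n 1_{{τ=λ}} + (τ+δ₁+⋯+δ_{n−1}) 1_{{τ≠λ}}) belongs to 𝒮^{n−1}_{τ+δ₁}(Lδ, 𝔉^{τ+δ₁}). -/

import Mathlib

open MeasureTheory Set Filter
open scoped ENNReal NNReal

noncomputable section

variable {Ω : Type*}

/-- `𝒢^ρ`: the smallest filtration making the `[0,∞]`-valued map `ρ` a stopping time,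
`𝒢^ρ_t = σ({ρ ≤ s} : s ≤ t)`. -/
def genFilt (ρ : Ω → ℝ≥0∞) (t : ℝ≥0) : MeasurableSpace Ω :=
  MeasurableSpace.generateFrom {A | ∃ s : ℝ≥0, s ≤ t ∧ A = {ω | ρ ω ≤ (s : ℝ≥0∞)}}

/-- `𝔄^ρ`: the smallest right-continuous filtration containing `𝔄` for which `ρ` is a
stopping time, i.e. the right-continuous regularization of `t ↦ σ(𝒜_t, 𝒢^ρ_t)`. -/
def rcEnlarge (𝔄 : ℝ≥0 → MeasurableSpace Ω) (ρ : Ω → ℝ≥0∞) (t : ℝ≥0) :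
    MeasurableSpace Ω :=
  ⨅ s ∈ Set.Ioi t, (𝔄 s ⊔ genFilt ρ s)

/-- Iterated enlargement `𝔄^{ρ₀,…,ρ_{i-1}}`. -/
def enrichedFilt (𝔄 : ℝ≥0 → MeasurableSpace Ω) (ρ : ℕ → Ω → ℝ≥0∞) :
    ℕ → ℝ≥0 → MeasurableSpace Ω
  | 0 => 𝔄
  | i + 1 => rcEnlarge (enrichedFilt 𝔄 ρ i) (ρ i)

/-- `ρ : Ω → [0,∞]` is a stopping time with respect to the filtration `𝔄 = (𝒜_t)_{t ≥ 0}`. -/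
def IsStoppingTimeE (𝔄 : ℝ≥0 → MeasurableSpace Ω) (ρ : Ω → ℝ≥0∞) : Prop :=
  ∀ t : ℝ≥0, MeasurableSet[𝔄 t] {ω | ρ ω ≤ (t : ℝ≥0∞)}

/-- The σ-algebra `𝒜_ρ` of events prior to the random time `ρ`. -/
def sigmaAt (𝔄 : ℝ≥0 → MeasurableSpace Ω) (ρ : Ω → ℝ≥0∞) : MeasurableSpace Ω :=
  MeasurableSpace.generateFrom
    {A | ∀ t : ℝ≥0, MeasurableSet[𝔄 t] (A ∩ {ω | ρ ω ≤ (t : ℝ≥0∞)})}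

/-- Evaluation `Y(τ)` of a process at a `[0,∞]`-valued random time, with the convention
`Y(∞) := limsup_{t→∞} Y(t)`. -/
def evalAt (Y : ℝ≥0 → Ω → ℝ) (τ : Ω → ℝ≥0∞) (ω : Ω) : ℝ :=
  if τ ω ≠ ∞ then Y (τ ω).toNNReal ω
  else limsup (fun t : ℝ≥0 => Y t ω) atTop

/-- Right-continuity of a filtration. -/
def RightContinuousFilt (𝔄 : ℝ≥0 → MeasurableSpace Ω) : Prop :=
  ∀ t : ℝ≥0, 𝔄 t = ⨅ s ∈ Set.Ioi t, 𝔄 s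

variable {m0 : MeasurableSpace Ω}

/-- `Z` is (a version of) the essential supremum of the family of random variables `F`. -/
def IsEssSupFam (μ : Measure Ω) (F : Set (Ω → ℝ)) (Z : Ω → ℝ) : Prop :=
  (∀ f ∈ F, f ≤ᵐ[μ] Z) ∧ ∀ g : Ω → ℝ, (∀ f ∈ F, f ≤ᵐ[μ] g) → Z ≤ᵐ[μ] g

/-- The set of strategies `𝒮^n_σ(δ, 𝔄)` (0-indexed: `τ 0` is the first exercise `τ₁`,
`δ 0` is the first waiting time `δ₁`). -/
def IsStrategy (𝔄 : ℝ≥0 → MeasurableSpace Ω) (δ : ℕ → Ω → ℝ≥0∞) (n : ℕ)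
    (σ : Ω → ℝ≥0∞) (τ : ℕ → Ω → ℝ≥0∞) : Prop :=
  IsStoppingTimeE 𝔄 (τ 0) ∧ (∀ ω, σ ω ≤ τ 0 ω) ∧
    ∀ i : ℕ, i + 1 < n →
      IsStoppingTimeE (enrichedFilt 𝔄 (fun j ω => τ j ω + δ j ω) (i + 1)) (τ (i + 1)) ∧
      ∀ ω, τ i ω + δ i ω ≤ τ (i + 1) ω

/-- `Σ_{i=1}^n Y(τ_i)`. -/
def rewardSum (Y : ℝ≥0 → Ω → ℝ) (n : ℕ) (τ : ℕ → Ω → ℝ≥0∞) (ω : Ω) : ℝ :=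
  ∑ i ∈ Finset.range n, evalAt Y (τ i) ω

/-- The family of random variables whose essential supremum is `Z_n^{δ,𝔄}(σ)`. -/
def gainFam (μ : Measure Ω) (Y : ℝ≥0 → Ω → ℝ) (𝔄 : ℝ≥0 → MeasurableSpace Ω)
    (δ : ℕ → Ω → ℝ≥0∞) (n : ℕ) (σ : Ω → ℝ≥0∞) : Set (Ω → ℝ) :=
  {g | ∃ τ : ℕ → Ω → ℝ≥0∞, IsStrategy 𝔄 δ n σ τ ∧
    g = μ[rewardSum Y n τ | sigmaAt 𝔄 σ]}

/-- The family of random variables whose essential supremum is `Z_n^{δ,𝔄}(σ)_disc`. -/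
def gainFamDisc (μ : Measure Ω) (Y : ℝ≥0 → Ω → ℝ) (𝔄 : ℝ≥0 → MeasurableSpace Ω)
    (δ : ℕ → Ω → ℝ≥0∞) (n : ℕ) (σ : Ω → ℝ≥0∞) : Set (Ω → ℝ) :=
  {g | ∃ τ : ℕ → Ω → ℝ≥0∞, IsStrategy 𝔄 δ n σ τ ∧ (Set.range (τ 0)).Countable ∧
    g = μ[rewardSum Y n τ | sigmaAt 𝔄 σ]}

/-- The hitting time `ρ_τ^B = inf{t > τ : X(t) ∈ B}` of `B` strictly after the random time `τ`. -/
def hitAfterE (X : ℝ≥0 → Ω → ℝ) (B : Set ℝ) (τ : Ω → ℝ≥0∞) (ω : Ω) : ℝ≥0∞ :=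
  ⨅ u ∈ {u : ℝ≥0 | τ ω < (u : ℝ≥0∞) ∧ X u ω ∈ B}, (u : ℝ≥0∞)

/-- The set of strategies `𝒮^n_σ(B)` of the second model. -/
def IsStrategyB (𝔉 : ℝ≥0 → MeasurableSpace Ω) (X : ℝ≥0 → Ω → ℝ) (B : ℕ → Set ℝ)
    (n : ℕ) (σ : Ω → ℝ≥0∞) (τ : ℕ → Ω → ℝ≥0∞) : Prop :=
  (∀ i < n, IsStoppingTimeE 𝔉 (τ i)) ∧ (∀ ω, σ ω ≤ τ 0 ω) ∧
    ∀ i : ℕ, i + 1 < n → ∀ ω, hitAfterE X (B i) (τ i) ω ≤ τ (i + 1) ω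

/-- The family of random variables whose essential supremum is `Z_n^B(σ)` (second model). -/
def gainFamB (μ : Measure Ω) (Y : ℝ≥0 → Ω → ℝ) (𝔉 : ℝ≥0 → MeasurableSpace Ω)
    (X : ℝ≥0 → Ω → ℝ) (B : ℕ → Set ℝ) (n : ℕ) (σ : Ω → ℝ≥0∞) : Set (Ω → ℝ) :=
  {g | ∃ τ : ℕ → Ω → ℝ≥0∞, IsStrategyB 𝔉 X B n σ τ ∧
    g = μ[rewardSum Y n τ | sigmaAt 𝔉 σ]}

/-!
On `D = {τ = λ}` the new strategy coincides with `(τ₂,…,τ_n)`, and off `D` it is the greedy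
strategy that exercises as early as the waiting times allow. Since `D ∈ 𝓕_λ`, and every time
involved is at least `λ` on `D`, it suffices to know that from time `λ` on the trace on `D` of
each filtration `(𝔉^{λ+δ₁})^{…}` is contained in the corresponding `(𝔉^{τ+δ₁})^{…}`. This
holds because the random times generating the two filtrations agree on `D`.
-/

lemma IsStoppingTimeE.measurableSet_lt {𝔄 : ℝ≥0 → MeasurableSpace Ω} {τ : Ω → ℝ≥0∞}
    (hτ : IsStoppingTimeE 𝔄 τ) (h𝔄 : Monotone 𝔄) (l : ℝ≥0) :
    MeasurableSet[𝔄 l] {ω | τ ω < l} := by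
  have hunion : {ω | τ ω < l} =
      ⋃ (q : ℚ) (_ : ((q : ℝ).toNNReal : ℝ≥0∞) < l), {ω | τ ω ≤ (q : ℝ).toNNReal} := by
    ext ω
    simp only [mem_ofPred_eq, mem_iUnion, exists_prop]
    constructor
    · intro h
      obtain ⟨q, -, hτq, hql⟩ := ENNReal.lt_iff_exists_rat_btwn.mp h
      exact ⟨q, hql, hτq.le⟩
    · rintro ⟨q, hql, hτq⟩
      exact hτq.trans_lt hql
  rw [hunion]
  exact .iUnion fun q => .iUnion fun hql => h𝔄 (by exact_mod_cast hql.le) _ (hτ _)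

lemma IsStoppingTimeE.measurableSet_eq {𝔄 : ℝ≥0 → MeasurableSpace Ω} {τ : Ω → ℝ≥0∞}
    (hτ : IsStoppingTimeE 𝔄 τ) (h𝔄 : Monotone 𝔄) (l : ℝ≥0) :
    MeasurableSet[𝔄 l] {ω | τ ω = l} := by
  have hdiff : {ω | τ ω = l} = {ω | τ ω ≤ l} \ {ω | τ ω < l} := by
    ext ω
    simp only [mem_ofPred_eq, Set.mem_sdiff, not_lt, le_antisymm_iff]
  rw [hdiff]
  exact (hτ l).diff (hτ.measurableSet_lt h𝔄 l)

lemma IsStrategy.le_apply {𝔄 : ℝ≥0 → MeasurableSpace Ω} {δ : ℕ → Ω → ℝ≥0∞} {n : ℕ}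
    {σ : Ω → ℝ≥0∞} {τ : ℕ → Ω → ℝ≥0∞} (h : IsStrategy 𝔄 δ n σ τ) {j : ℕ} (hj : j < n)
    (ω : Ω) : σ ω ≤ τ j ω := by
  induction j with
  | zero => exact h.2.1 ω
  | succ j ih => exact (ih (by omega)).trans (le_self_add.trans ((h.2.2 j hj).2 ω))

section Enlargement

variable {𝔄 : ℝ≥0 → MeasurableSpace Ω} {ρ : Ω → ℝ≥0∞}

lemma measurableSet_rcEnlarge_iff {t : ℝ≥0} {A : Set Ω} :
    MeasurableSet[rcEnlarge 𝔄 ρ t] A ↔ ∀ s, t < s → MeasurableSet[𝔄 s ⊔ genFilt ρ s] A := by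
  unfold rcEnlarge
  simp only [MeasurableSpace.measurableSet_iInf, mem_Ioi]

lemma measurableSet_genFilt {s t : ℝ≥0} (h : s ≤ t) :
    MeasurableSet[genFilt ρ t] {ω | ρ ω ≤ s} :=
  MeasurableSpace.measurableSet_generateFrom ⟨s, h, rfl⟩

lemma isStoppingTimeE_rcEnlarge : IsStoppingTimeE (rcEnlarge 𝔄 ρ) ρ := fun _ =>
  measurableSet_rcEnlarge_iff.mpr fun _ hs =>
    (le_sup_right : genFilt ρ _ ≤ _) _ (measurableSet_genFilt hs.le)

lemma rcEnlarge_mono : Monotone (rcEnlarge 𝔄 ρ) := fun _ _ h =>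
  le_iInf₂ fun s hs => iInf₂_le s (h.trans_lt hs)

lemma le_rcEnlarge (h𝔄 : Monotone 𝔄) (t : ℝ≥0) : 𝔄 t ≤ rcEnlarge 𝔄 ρ t :=
  le_iInf₂ fun _ hs => (h𝔄 (le_of_lt hs)).trans le_sup_left

lemma enrichedFilt_mono (h𝔄 : Monotone 𝔄) (ρ : ℕ → Ω → ℝ≥0∞) :
    ∀ i, Monotone (enrichedFilt 𝔄 ρ i)
  | 0 => h𝔄
  | _ + 1 => rcEnlarge_mono

lemma le_enrichedFilt (h𝔄 : Monotone 𝔄) (ρ : ℕ → Ω → ℝ≥0∞) :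
    ∀ i t, 𝔄 t ≤ enrichedFilt 𝔄 ρ i t
  | 0, _ => le_rfl
  | i + 1, t => (le_enrichedFilt h𝔄 ρ i t).trans (le_rcEnlarge (enrichedFilt_mono h𝔄 ρ i) t)

end Enlargement

abbrev traceSpace (P : MeasurableSpace Ω) (D : Set Ω) (hD : MeasurableSet[P] D) :
    MeasurableSpace Ω where
  MeasurableSet' B := MeasurableSet[P] (B ∩ D)
  measurableSet_empty := by simp
  measurableSet_compl B hB := by
    convert hD.diff hB using 1
    ext
    simp [and_comm]
  measurableSet_iUnion f hf := by
    simpa only [iUnion_inter] using MeasurableSet.iUnion hf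

lemma measurableSet_traceSpace {P : MeasurableSpace Ω} {D : Set Ω} {hD : MeasurableSet[P] D}
    {B : Set Ω} : MeasurableSet[traceSpace P D hD] B ↔ MeasurableSet[P] (B ∩ D) := Iff.rfl

def TraceLEFrom (𝔄' 𝔄 : ℝ≥0 → MeasurableSpace Ω) (D : Set Ω) (l : ℝ≥0) : Prop :=
  ∀ t, l ≤ t → ∀ A : Set Ω, MeasurableSet[𝔄' t] A → MeasurableSet[𝔄 t] (A ∩ D)

section TraceLEFrom

variable {𝔄' 𝔄 : ℝ≥0 → MeasurableSpace Ω} {D : Set Ω} {l : ℝ≥0}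

lemma traceLEFrom_self (h𝔄 : Monotone 𝔄) (hD : MeasurableSet[𝔄 l] D) :
    TraceLEFrom 𝔄 𝔄 D l := fun _ ht _ hA => hA.inter (h𝔄 ht _ hD)

lemma TraceLEFrom.rcEnlarge (htr : TraceLEFrom 𝔄' 𝔄 D l) (h𝔄 : Monotone 𝔄)
    (hD : MeasurableSet[𝔄 l] D) {ρ' ρ : Ω → ℝ≥0∞} (hρ : EqOn ρ' ρ D) :
    TraceLEFrom (rcEnlarge 𝔄' ρ') (rcEnlarge 𝔄 ρ) D l := by
  intro t hlt A hA
  rw [measurableSet_rcEnlarge_iff] at hA ⊢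
  intro s hts
  have hls : l ≤ s := hlt.trans hts.le
  have hDs : MeasurableSet[𝔄 s ⊔ genFilt ρ s] D := (le_sup_left : 𝔄 s ≤ _) _ (h𝔄 hls _ hD)
  have h𝔄' : 𝔄' s ≤ traceSpace _ D hDs := fun B hB =>
    (le_sup_left : 𝔄 s ≤ _) _ (htr s hls B hB)
  have hgen : genFilt ρ' s ≤ traceSpace _ D hDs := by
    refine MeasurableSpace.generateFrom_le ?_
    rintro _ ⟨u, hu, rfl⟩
    have hinter : {ω | ρ' ω ≤ u} ∩ D = {ω | ρ ω ≤ u} ∩ D := by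
      ext ω
      simp only [mem_inter_iff, mem_ofPred_eq]
      exact and_congr_left fun hω => by rw [hρ hω]
    rw [measurableSet_traceSpace, hinter]
    exact ((le_sup_right : genFilt ρ s ≤ _) _ (measurableSet_genFilt hu)).inter hDs
  exact sup_le h𝔄' hgen A (hA s hts)

lemma TraceLEFrom.enrichedFilt (htr : TraceLEFrom 𝔄' 𝔄 D l) (h𝔄 : Monotone 𝔄)
    (hD : MeasurableSet[𝔄 l] D) {ρ' ρ : ℕ → Ω → ℝ≥0∞} (hρ : ∀ j, EqOn (ρ' j) (ρ j) D) :
    ∀ i, TraceLEFrom (enrichedFilt 𝔄' ρ' i) (enrichedFilt 𝔄 ρ i) D l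
  | 0 => htr
  | i + 1 => (htr.enrichedFilt h𝔄 hD hρ i).rcEnlarge (enrichedFilt_mono h𝔄 ρ i)
      (le_enrichedFilt h𝔄 ρ i l _ hD) (hρ i)

-- Before time `l` the set `D` need not be known; this is harmless since `p` and `r` are at
-- least `l` on `D`.
lemma IsStoppingTimeE.of_eqOn (htr : TraceLEFrom 𝔄' 𝔄 D l) (h𝔄 : Monotone 𝔄)
    (hD : MeasurableSet[𝔄 l] D) {p r q : Ω → ℝ≥0∞} (hp : IsStoppingTimeE 𝔄' p)
    (hr : IsStoppingTimeE 𝔄 r) (hpl : ∀ ω ∈ D, l ≤ p ω) (hrl : ∀ ω ∈ D, l ≤ r ω)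
    (hqp : EqOn q p D) (hqr : EqOn q r Dᶜ) : IsStoppingTimeE 𝔄 q := by
  intro t
  rcases lt_or_ge t l with htl | hlt
  · have hq : {ω | q ω ≤ t} = {ω | r ω ≤ t} := by
      ext ω
      by_cases hω : ω ∈ D
      · have hlt' : (t : ℝ≥0∞) < l := by exact_mod_cast htl
        simp only [mem_ofPred_eq, hqp hω]
        exact iff_of_false (hlt'.trans_le (hpl ω hω)).not_ge (hlt'.trans_le (hrl ω hω)).not_ge
      · simp only [mem_ofPred_eq, hqr hω]
    rw [hq]
    exact hr t
  · have hq : {ω | q ω ≤ t} = {ω | p ω ≤ t} ∩ D ∪ {ω | r ω ≤ t} ∩ Dᶜ := by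
      ext ω
      by_cases hω : ω ∈ D
      · simp [hω, hqp hω]
      · simp [hω, hqr hω]
    rw [hq]
    exact (htr t hlt _ (hp t)).union ((hr t).inter (h𝔄 hlt _ hD).compl)

lemma IsStrategy.of_eqOn {δ : ℕ → Ω → ℝ≥0∞} {n : ℕ} {σ' σ : Ω → ℝ≥0∞}
    {p q : ℕ → Ω → ℝ≥0∞} (hp : IsStrategy 𝔄' δ n σ' p) (htr : TraceLEFrom 𝔄' 𝔄 D l)
    (h𝔄 : Monotone 𝔄) (hD : MeasurableSet[𝔄 l] D) (hσ : IsStoppingTimeE 𝔄 σ)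
    (hσσ' : EqOn σ σ' D) (hσl : ∀ ω ∈ D, l ≤ σ ω) (hqp : ∀ j, EqOn (q j) (p j) D)
    (hq0 : EqOn (q 0) σ Dᶜ) (hqsucc : ∀ j, EqOn (q (j + 1)) (fun ω => q j ω + δ j ω) Dᶜ) :
    IsStrategy 𝔄 δ n σ q := by
  have hσ'l (ω : Ω) (hω : ω ∈ D) : l ≤ σ' ω := (hσl ω hω).trans (hσσ' hω).le
  have hpl (j : ℕ) (hj : j < n) (ω : Ω) (hω : ω ∈ D) : l ≤ p j ω :=
    (hσ'l ω hω).trans (hp.le_apply hj ω)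
  have htr' := htr.enrichedFilt h𝔄 hD (ρ' := fun j ω => p j ω + δ j ω)
    (ρ := fun j ω => q j ω + δ j ω) fun j ω hω => by dsimp only; rw [hqp j hω]
  refine ⟨?_, fun ω => ?_, fun i hi => ⟨?_, fun ω => ?_⟩⟩
  · exact IsStoppingTimeE.of_eqOn htr h𝔄 hD hp.1 hσ (fun ω hω => (hσ'l ω hω).trans (hp.2.1 ω))
      hσl (hqp 0) hq0
  · by_cases hω : ω ∈ D
    · rw [hqp 0 hω, hσσ' hω]
      exact hp.2.1 ω
    · exact (hq0 hω).ge
  · refine IsStoppingTimeE.of_eqOn (htr' (i + 1)) (enrichedFilt_mono h𝔄 _ (i + 1))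
      (le_enrichedFilt h𝔄 _ (i + 1) l _ hD) (hp.2.2 i hi).1 isStoppingTimeE_rcEnlarge
      (hpl (i + 1) hi) (fun ω hω => ?_) (hqp (i + 1)) (hqsucc i)
    dsimp only
    rw [hqp i hω]
    exact (hpl i (by omega) ω hω).trans le_self_add
  · by_cases hω : ω ∈ D
    · rw [hqp i hω, hqp (i + 1) hω]
      exact (hp.2.2 i hi).2 ω
    · exact (hqsucc i hω).ge

end TraceLEFrom

theorem strategy_transfer_from_constant_time_general
    (𝔉 : ℝ≥0 → MeasurableSpace Ω) (hmono : Monotone 𝔉)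
    (n : ℕ) (δ : ℕ → Ω → ℝ≥0∞)
    (τ : Ω → ℝ≥0∞) (hτ : IsStoppingTimeE 𝔉 τ) (l : ℝ≥0)
    (p : ℕ → Ω → ℝ≥0∞)
    (hp : IsStrategy (rcEnlarge 𝔉 (fun ω => (l : ℝ≥0∞) + δ 0 ω)) (fun i => δ (i + 1)) (n - 1)
      (fun ω => (l : ℝ≥0∞) + δ 0 ω) p) :
    IsStrategy (rcEnlarge 𝔉 (fun ω => τ ω + δ 0 ω)) (fun i => δ (i + 1)) (n - 1)
      (fun ω => τ ω + δ 0 ω)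
      (fun j ω => if τ ω = (l : ℝ≥0∞) then p j ω
        else τ ω + ∑ k ∈ Finset.range (j + 1), δ k ω) := by
  set D : Set Ω := {ω | τ ω = l}
  have hD : MeasurableSet[𝔉 l] D := hτ.measurableSet_eq hmono l
  have hσσ' : EqOn (fun ω => τ ω + δ 0 ω) (fun ω => l + δ 0 ω) D := fun ω (hω : τ ω = l) =>
    congrArg (· + δ 0 ω) hω
  have htr : TraceLEFrom (rcEnlarge 𝔉 fun ω => l + δ 0 ω) (rcEnlarge 𝔉 fun ω => τ ω + δ 0 ω)
      D l :=
    (traceLEFrom_self hmono hD).rcEnlarge hmono hD hσσ'.symm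
  refine hp.of_eqOn htr rcEnlarge_mono (le_rcEnlarge hmono l _ hD) isStoppingTimeE_rcEnlarge
    hσσ' (fun ω hω => (hσσ' hω).trans_ge le_self_add) (fun j ω hω => if_pos hω)
    (fun ω hω => ?_) (fun j ω hω => ?_)
  · simp [if_neg (show ¬τ ω = l from hω)]
  · simp only [if_neg (show ¬τ ω = l from hω)]
    rw [Finset.sum_range_succ _ (j + 1), add_assoc]

/-- If `τ` is an `𝔉`-stopping time, `λ ≥ 0` and
`(τ₂,…,τ_n) ∈ 𝒮^{n-1}_{λ+δ₁}(Lδ, 𝔉^{λ+δ₁})`, then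
`(τ₂ 1_{τ=λ} + (τ+δ₁) 1_{τ≠λ}, …, τ_n 1_{τ=λ} + (τ+δ₁+⋯+δ_{n-1}) 1_{τ≠λ})`
belongs to `𝒮^{n-1}_{τ+δ₁}(Lδ, 𝔉^{τ+δ₁})`. -/
theorem strategy_transfer_from_constant_time
    (μ : Measure Ω) [IsProbabilityMeasure μ]
    (𝔉 : ℝ≥0 → MeasurableSpace Ω) (hle : ∀ t, 𝔉 t ≤ m0) (hmono : Monotone 𝔉)
    (hrc : RightContinuousFilt 𝔉)
    (hnull : ∀ A : Set Ω, μ A = 0 → MeasurableSet[𝔉 0] A)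
    (n : ℕ) (hn : 2 ≤ n) (δ : ℕ → Ω → ℝ≥0∞)
    (hδfin : ∀ i, i + 1 < n → ∀ᵐ ω ∂μ, δ i ω < ∞)
    (τ : Ω → ℝ≥0∞) (hτ : IsStoppingTimeE 𝔉 τ) (l : ℝ≥0)
    (p : ℕ → Ω → ℝ≥0∞)
    (hp : IsStrategy (rcEnlarge 𝔉 (fun ω => (l : ℝ≥0∞) + δ 0 ω)) (fun i => δ (i + 1)) (n - 1)
      (fun ω => (l : ℝ≥0∞) + δ 0 ω) p) :
    IsStrategy (rcEnlarge 𝔉 (fun ω => τ ω + δ 0 ω)) (fun i => δ (i + 1)) (n - 1)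
      (fun ω => τ ω + δ 0 ω)
      (fun j ω => if τ ω = (l : ℝ≥0∞) then p j ω
        else τ ω + ∑ k ∈ Finset.range (j + 1), δ k ω) :=
  strategy_transfer_from_constant_time_general 𝔉 hmono n δ τ hτ l p hp
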